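/- arXiv:2409.17903 — 2 statements merged into one kernel-verified Lean document; each statement's English description precedes it below -/
import Mathlib

section
/- For every ε > 0 and every z with |z| < 1, the difference between G_ε(z) = ((z−1)/√ε)·arctan(√ε·z / (1 − z + ε)) − (1/2)·ln((ε + (z−1)²)/(1+ε)) and G₀(z) = −z − ln|1−z| satisfies |G_ε(z) − G₀(z)| ≤ √ε / (4·|1−z|). -/
open Real

noncomputable def Gent (ε z : ℝ) : ℝ :=
  ((z - 1) / Real.sqrt ε) * Real.arctan (Real.sqrt ε * z / (1 - z + ε)) -
    (1 / 2) * Real.log ((ε + (z - 1) ^ 2) / (1 + ε))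

noncomputable def Gent0 (z : ℝ) : ℝ := -z - Real.log |1 - z|

/-- Monotone comparison helper: if `f` has derivative `g ≥ 0` on `[c,d]` then `f c ≤ f d`. -/
lemma mono_aux {f g : ℝ → ℝ} {c d : ℝ} (hcd : c ≤ d)
    (hf : ∀ x ∈ Set.Icc c d, HasDerivAt f (g x) x)
    (hg : ∀ x ∈ Set.Ioo c d, 0 ≤ g x) : f c ≤ f d := by
  have hmono : MonotoneOn f (Set.Icc c d) := by
    apply monotoneOn_of_deriv_nonneg (convex_Icc c d)
    · exact fun x hx => (hf x hx).continuousAt.continuousWithinAt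
    · intro x hx
      rw [interior_Icc] at hx
      exact (hf x (Set.Ioo_subset_Icc_self hx)).differentiableAt.differentiableWithinAt
    · intro x hx
      rw [interior_Icc] at hx
      rw [(hf x (Set.Ioo_subset_Icc_self hx)).deriv]
      exact hg x hx
  exact hmono (Set.left_mem_Icc.mpr hcd) (Set.right_mem_Icc.mpr hcd) hcd

/-- Antitone comparison helper: if `f` has derivative `g ≤ 0` on `[c,d]` then `f d ≤ f c`. -/
lemma anti_aux {f g : ℝ → ℝ} {c d : ℝ} (hcd : c ≤ d)
    (hf : ∀ x ∈ Set.Icc c d, HasDerivAt f (g x) x)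
    (hg : ∀ x ∈ Set.Ioo c d, g x ≤ 0) : f d ≤ f c := by
  have hanti : AntitoneOn f (Set.Icc c d) := by
    apply antitoneOn_of_deriv_nonpos (convex_Icc c d)
    · exact fun x hx => (hf x hx).continuousAt.continuousWithinAt
    · intro x hx
      rw [interior_Icc] at hx
      exact (hf x (Set.Ioo_subset_Icc_self hx)).differentiableAt.differentiableWithinAt
    · intro x hx
      rw [interior_Icc] at hx
      rw [(hf x (Set.Ioo_subset_Icc_self hx)).deriv]
      exact hg x hx
  exact hanti (Set.left_mem_Icc.mpr hcd) (Set.right_mem_Icc.mpr hcd) hcd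

/-- The function `Q(b) = 1/b - 1 - (1/u)·arctan(u(1-b)/(b+u²))`, which is minus the
`w`-derivative of `Gent - Gent0` evaluated at `b = 1 - w`. -/
noncomputable def Qf (u b : ℝ) : ℝ :=
  b⁻¹ - 1 - u⁻¹ * Real.arctan (u * (1 - b) / (b + u ^ 2))

lemma Qf_deriv (u : ℝ) (hu : 0 < u) {b : ℝ} (hb : 0 < b) :
    HasDerivAt (Qf u) (-(b ^ 2)⁻¹ + (b ^ 2 + u ^ 2)⁻¹) b := by
  have hd : (0:ℝ) < b + u ^ 2 := by positivity
  have h1 : HasDerivAt (fun x : ℝ => u * (1 - x)) (u * (-1)) b :=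
    ((hasDerivAt_id b).const_sub 1).const_mul u
  have h2 : HasDerivAt (fun x : ℝ => x + u ^ 2) 1 b := (hasDerivAt_id b).add_const (u ^ 2)
  have h3 := (h1.div h2 (ne_of_gt hd)).arctan
  have h4 : HasDerivAt (fun x : ℝ => x⁻¹) (-(b ^ 2)⁻¹) b := hasDerivAt_inv (ne_of_gt hb)
  have h5 := (h4.sub_const 1).sub (h3.const_mul u⁻¹)
  have h1θ : (0:ℝ) < 1 + (u * (1 - b) / (b + u ^ 2)) ^ 2 := by positivity
  have hb2 : (0:ℝ) < b ^ 2 + u ^ 2 := by positivity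
  refine h5.congr_deriv ?_
  have key : (b + u ^ 2) ^ 2 + (u * (1 - b)) ^ 2 = (1 + u ^ 2) * (b ^ 2 + u ^ 2) := by ring
  simp only [Pi.div_apply]
  field_simp
  ring

lemma Rneg_deriv (u : ℝ) {x : ℝ} (hx : 0 < x) :
    HasDerivAt (fun y : ℝ => u / 4 * ((y ^ 2)⁻¹ - 1)) (-(u / (2 * x ^ 3))) x := by
  have h1 : HasDerivAt (fun y : ℝ => y ^ 2) (2 * x) x := by
    simpa using hasDerivAt_pow 2 x
  have h2 := ((h1.inv (by positivity)).sub_const 1).const_mul (u / 4)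
  refine h2.congr_deriv ?_
  field_simp
  ring

lemma Rpos_deriv (u : ℝ) {x : ℝ} (hx : 0 < x) :
    HasDerivAt (fun y : ℝ => u / 4 * (1 - (y ^ 2)⁻¹)) (u / (2 * x ^ 3)) x := by
  have h1 : HasDerivAt (fun y : ℝ => y ^ 2) (2 * x) x := by
    simpa using hasDerivAt_pow 2 x
  have h2 := ((h1.inv (by positivity)).const_sub 1).const_mul (u / 4)
  refine h2.congr_deriv ?_
  field_simp
  ring

/-- Key pointwise bound: `|Q(b)| ≤ (u/4)·|1/b² - 1|` for `u, b > 0`. -/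
lemma Qf_bound (u : ℝ) (hu : 0 < u) {b : ℝ} (hb : 0 < b) :
    |Qf u b| ≤ u / 4 * |(b ^ 2)⁻¹ - 1| := by
  have hQ1 : Qf u 1 = 0 := by
    simp [Qf]
  rcases le_total b 1 with hb1 | hb1
  · -- 0 < b ≤ 1
    have hone : (1:ℝ) ≤ (b ^ 2)⁻¹ := by
      have hp : (0:ℝ) < b ^ 2 := by positivity
      have hle : b ^ 2 ≤ 1 := by nlinarith
      nlinarith [mul_inv_cancel₀ hp.ne', mul_nonneg (sub_nonneg.mpr hle) (inv_pos.mpr hp).le]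
    have habs : |(b ^ 2)⁻¹ - 1| = (b ^ 2)⁻¹ - 1 := abs_of_nonneg (by linarith)
    -- F1 = R - Q is antitone on [b, 1]
    have hF1 : (fun x => u / 4 * ((x ^ 2)⁻¹ - 1) - Qf u x) 1 ≤
        (fun x => u / 4 * ((x ^ 2)⁻¹ - 1) - Qf u x) b := by
      apply anti_aux (f := fun x => u / 4 * ((x ^ 2)⁻¹ - 1) - Qf u x) (g := fun x => -(u / (2 * x ^ 3)) - (-(x ^ 2)⁻¹ + (x ^ 2 + u ^ 2)⁻¹)) hb1
      · intro x hx
        have hx0 : 0 < x := lt_of_lt_of_le hb hx.1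
        exact (Rneg_deriv u hx0).sub (Qf_deriv u hu hx0)
      · intro x hx
        have hx0 : 0 < x := lt_trans hb hx.1
        have key : -(u / (2 * x ^ 3)) - (-(x ^ 2)⁻¹ + (x ^ 2 + u ^ 2)⁻¹) =
            -(u * (x - u) ^ 2) / (2 * x ^ 3 * (x ^ 2 + u ^ 2)) := by
          have h1 : (0:ℝ) < x ^ 2 + u ^ 2 := by positivity
          field_simp
          ring
        rw [key]
        apply div_nonpos_of_nonpos_of_nonneg
        · have : (0:ℝ) ≤ u * (x - u) ^ 2 := by positivity
          linarith
        · positivity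
    -- F2 = R + Q is antitone on [b, 1]
    have hF2 : (fun x => u / 4 * ((x ^ 2)⁻¹ - 1) + Qf u x) 1 ≤
        (fun x => u / 4 * ((x ^ 2)⁻¹ - 1) + Qf u x) b := by
      apply anti_aux (f := fun x => u / 4 * ((x ^ 2)⁻¹ - 1) + Qf u x) (g := fun x => -(u / (2 * x ^ 3)) + (-(x ^ 2)⁻¹ + (x ^ 2 + u ^ 2)⁻¹)) hb1
      · intro x hx
        have hx0 : 0 < x := lt_of_lt_of_le hb hx.1
        exact (Rneg_deriv u hx0).add (Qf_deriv u hu hx0)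
      · intro x hx
        have hx0 : 0 < x := lt_trans hb hx.1
        have key : -(u / (2 * x ^ 3)) + (-(x ^ 2)⁻¹ + (x ^ 2 + u ^ 2)⁻¹) =
            -(u * (x + u) ^ 2) / (2 * x ^ 3 * (x ^ 2 + u ^ 2)) := by
          have h1 : (0:ℝ) < x ^ 2 + u ^ 2 := by positivity
          field_simp
          ring
        rw [key]
        apply div_nonpos_of_nonpos_of_nonneg
        · have : (0:ℝ) ≤ u * (x + u) ^ 2 := by positivity
          linarith
        · positivity
    simp only [hQ1] at hF1 hF2
    norm_num at hF1 hF2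
    rw [habs]
    rw [abs_le]
    constructor <;> linarith
  · -- 1 ≤ b
    have hone : (b ^ 2)⁻¹ ≤ 1 := by
      have hp : (0:ℝ) < b ^ 2 := by positivity
      have hle : (1:ℝ) ≤ b ^ 2 := by nlinarith
      nlinarith [mul_inv_cancel₀ hp.ne', mul_nonneg (sub_nonneg.mpr hle) (inv_pos.mpr hp).le]
    have habs : |(b ^ 2)⁻¹ - 1| = 1 - (b ^ 2)⁻¹ := by
      rw [abs_of_nonpos (by linarith), neg_sub]
    -- F3 = R̃ - Q is monotone on [1, b]
    have hF3 : (fun x => u / 4 * (1 - (x ^ 2)⁻¹) - Qf u x) 1 ≤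
        (fun x => u / 4 * (1 - (x ^ 2)⁻¹) - Qf u x) b := by
      apply mono_aux (f := fun x => u / 4 * (1 - (x ^ 2)⁻¹) - Qf u x) (g := fun x => u / (2 * x ^ 3) - (-(x ^ 2)⁻¹ + (x ^ 2 + u ^ 2)⁻¹)) hb1
      · intro x hx
        have hx0 : (0:ℝ) < x := lt_of_lt_of_le one_pos hx.1
        exact (Rpos_deriv u hx0).sub (Qf_deriv u hu hx0)
      · intro x hx
        have hx0 : (0:ℝ) < x := lt_trans one_pos hx.1
        have key : u / (2 * x ^ 3) - (-(x ^ 2)⁻¹ + (x ^ 2 + u ^ 2)⁻¹) =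
            (u * (x + u) ^ 2) / (2 * x ^ 3 * (x ^ 2 + u ^ 2)) := by
          have h1 : (0:ℝ) < x ^ 2 + u ^ 2 := by positivity
          field_simp
          ring
        rw [key]
        positivity
    -- F4 = R̃ + Q is monotone on [1, b]
    have hF4 : (fun x => u / 4 * (1 - (x ^ 2)⁻¹) + Qf u x) 1 ≤
        (fun x => u / 4 * (1 - (x ^ 2)⁻¹) + Qf u x) b := by
      apply mono_aux (f := fun x => u / 4 * (1 - (x ^ 2)⁻¹) + Qf u x) (g := fun x => u / (2 * x ^ 3) + (-(x ^ 2)⁻¹ + (x ^ 2 + u ^ 2)⁻¹)) hb1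
      · intro x hx
        have hx0 : (0:ℝ) < x := lt_of_lt_of_le one_pos hx.1
        exact (Rpos_deriv u hx0).add (Qf_deriv u hu hx0)
      · intro x hx
        have hx0 : (0:ℝ) < x := lt_trans one_pos hx.1
        have key : u / (2 * x ^ 3) + (-(x ^ 2)⁻¹ + (x ^ 2 + u ^ 2)⁻¹) =
            (u * (x - u) ^ 2) / (2 * x ^ 3 * (x ^ 2 + u ^ 2)) := by
          have h1 : (0:ℝ) < x ^ 2 + u ^ 2 := by positivity
          field_simp
          ring
        rw [key]
        positivity
    simp only [hQ1] at hF3 hF4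
    norm_num at hF3 hF4
    rw [habs]
    rw [abs_le]
    constructor <;> linarith

/-- Derivative of `H(w) = Gent (u²) w - Gent0 w` (rewritten without `sqrt` and `abs`). -/
lemma H_deriv (u : ℝ) (hu : 0 < u) {w : ℝ} (hw1 : -1 < w) (hw2 : w < 1) :
    HasDerivAt (fun w => ((w - 1) / u) * Real.arctan (u * w / (1 - w + u ^ 2)) -
      (1 / 2) * Real.log ((u ^ 2 + (w - 1) ^ 2) / (1 + u ^ 2)) + w + Real.log (1 - w))
      (-(Qf u (1 - w))) w := by
  have hb : 0 < 1 - w := by linarith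
  have hden : 0 < 1 - w + u ^ 2 := by positivity
  have hnum : 0 < u ^ 2 + (w - 1) ^ 2 :=
    add_pos_of_pos_of_nonneg (pow_pos hu 2) (sq_nonneg _)
  have hratio : (0:ℝ) < (u ^ 2 + (w - 1) ^ 2) / (1 + u ^ 2) := div_pos hnum (by positivity)
  have h1 : HasDerivAt (fun w : ℝ => u * w) (u * 1) w := (hasDerivAt_id w).const_mul u
  have h2 : HasDerivAt (fun w : ℝ => 1 - w + u ^ 2) (-1) w := by
    simpa using ((hasDerivAt_id w).const_sub 1).add_const (u ^ 2)
  have h3 := (h1.div h2 (ne_of_gt hden)).arctan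
  have h4 : HasDerivAt (fun w : ℝ => (w - 1) / u) (1 / u) w :=
    ((hasDerivAt_id w).sub_const 1).div_const u
  have h5 := h4.mul h3
  have h6 : HasDerivAt (fun w : ℝ => (u ^ 2 + (w - 1) ^ 2) / (1 + u ^ 2))
      ((2 * (w - 1) ^ 1 * 1) / (1 + u ^ 2)) w := by
    have h := ((((hasDerivAt_id w).sub_const 1).pow 2).const_add (u ^ 2)).div_const (1 + u ^ 2)
    refine h.congr_deriv ?_
    all_goals norm_num
  have h7 := h6.log (ne_of_gt hratio)
  have h8 : HasDerivAt (fun w : ℝ => Real.log (1 - w)) (-1 / (1 - w)) w := by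
    exact ((hasDerivAt_id w).const_sub 1).log (ne_of_gt hb)
  have hid : HasDerivAt (fun w : ℝ => w) 1 w := hasDerivAt_id w
  have total := ((h5.sub (h7.const_mul (1 / 2 : ℝ))).add hid).add h8
  refine total.congr_deriv ?_
  simp only [Qf]
  rw [show u * (1 - (1 - w)) / ((1 - w) + u ^ 2) = u * w / (1 - w + u ^ 2) by ring]
  have h1θ : (0:ℝ) < 1 + (u * w / (1 - w + u ^ 2)) ^ 2 := by positivity
  have key : (1 - w + u ^ 2) ^ 2 + (u * w) ^ 2 = (1 + u ^ 2) * ((1 - w) ^ 2 + u ^ 2) := by ring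
  simp only [Pi.div_apply]
  field_simp
  ring

lemma main_aux (u : ℝ) (hu : 0 < u) (z : ℝ) (hz : |z| < 1) :
    |Gent (u ^ 2) z - Gent0 z| ≤ u / (4 * |1 - z|) := by
  obtain ⟨hz1, hz2⟩ := abs_lt.mp hz
  have hb : 0 < 1 - z := by linarith
  have hsq : Real.sqrt (u ^ 2) = u := Real.sqrt_sq hu.le
  set H : ℝ → ℝ := fun w => ((w - 1) / u) * Real.arctan (u * w / (1 - w + u ^ 2)) -
      (1 / 2) * Real.log ((u ^ 2 + (w - 1) ^ 2) / (1 + u ^ 2)) + w + Real.log (1 - w) with hHdef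
  have hGH : Gent (u ^ 2) z - Gent0 z = H z := by
    simp only [hHdef, Gent, Gent0, hsq, Real.log_abs]
    ring
  set K : ℝ → ℝ := fun w => u / 4 * ((1 - w)⁻¹ - 1 - w) with hKdef
  have hKd : ∀ x ∈ Set.Ioo (-1:ℝ) 1, HasDerivAt K (u / 4 * (((1 - x) ^ 2)⁻¹ - 1)) x := by
    intro x hx
    have hbx : 0 < 1 - x := by linarith [hx.2]
    have h1 : HasDerivAt (fun w : ℝ => 1 - w) (-1) x := (hasDerivAt_id x).const_sub 1
    have h2 := h1.inv (ne_of_gt hbx)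
    have h3 := ((h2.sub_const 1).sub (hasDerivAt_id x)).const_mul (u / 4)
    refine h3.congr_deriv ?_
    field_simp
  have hHd : ∀ x ∈ Set.Ioo (-1:ℝ) 1, HasDerivAt H (-(Qf u (1 - x))) x := by
    intro x hx
    exact H_deriv u hu hx.1 hx.2
  have hH0 : H 0 = 0 := by
    have e1 : (u ^ 2 + 1) / (1 + u ^ 2) = 1 := by
      rw [add_comm]
      exact div_self (by positivity)
    simp [hHdef, e1, Real.arctan_zero, Real.log_one]
  have hK0 : K 0 = 0 := by simp [hKdef]
  have key : |H z| ≤ K z := by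
    rcases le_total 0 z with hzp | hzn
    · -- 0 ≤ z < 1 : compare on [0, z]
      have hmem : ∀ x ∈ Set.Icc 0 z, x ∈ Set.Ioo (-1:ℝ) 1 := by
        intro x hx
        exact ⟨by linarith [hx.1], by linarith [hx.2]⟩
      have hbound : ∀ x ∈ Set.Ioo (0:ℝ) z, |Qf u (1 - x)| ≤ u / 4 * (((1 - x) ^ 2)⁻¹ - 1) := by
        intro x hx
        have hbx : 0 < 1 - x := by linarith [hx.2]
        have hone : (1:ℝ) ≤ ((1 - x) ^ 2)⁻¹ := by
          have hp : (0:ℝ) < (1 - x) ^ 2 := by positivity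
          have hle : (1 - x) ^ 2 ≤ 1 := by nlinarith [hx.1]
          nlinarith [mul_inv_cancel₀ hp.ne', mul_nonneg (sub_nonneg.mpr hle) (inv_pos.mpr hp).le]
        have h := Qf_bound u hu hbx
        rwa [abs_of_nonneg (by linarith : (0:ℝ) ≤ ((1 - x) ^ 2)⁻¹ - 1)] at h
      have h1 : (fun x => K x - H x) 0 ≤ (fun x => K x - H x) z := by
        apply mono_aux (f := fun x => K x - H x) (g := fun x => u / 4 * (((1 - x) ^ 2)⁻¹ - 1) - -Qf u (1 - x)) hzp
        · intro x hx
          exact (hKd x (hmem x hx)).sub (hHd x (hmem x hx))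
        · intro x hx
          have := hbound x hx
          have h2 := abs_le.mp this
          simp only [sub_neg_eq_add]
          linarith [h2.1]
      have h2 : (fun x => K x + H x) 0 ≤ (fun x => K x + H x) z := by
        apply mono_aux (f := fun x => K x + H x) (g := fun x => u / 4 * (((1 - x) ^ 2)⁻¹ - 1) + -Qf u (1 - x)) hzp
        · intro x hx
          exact (hKd x (hmem x hx)).add (hHd x (hmem x hx))
        · intro x hx
          have := hbound x hx
          have h2 := abs_le.mp this
          linarith [h2.2]
      simp only [hH0, hK0] at h1 h2
      norm_num at h1 h2
      rw [abs_le]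
      constructor <;> linarith
    · -- -1 < z ≤ 0 : compare on [z, 0]
      have hmem : ∀ x ∈ Set.Icc z 0, x ∈ Set.Ioo (-1:ℝ) 1 := by
        intro x hx
        exact ⟨by linarith [hx.1], by linarith [hx.2]⟩
      have hbound : ∀ x ∈ Set.Ioo z (0:ℝ), |Qf u (1 - x)| ≤ u / 4 * (1 - ((1 - x) ^ 2)⁻¹) := by
        intro x hx
        have hbx : (0:ℝ) < 1 - x := by linarith [hx.2]
        have hone : ((1 - x) ^ 2)⁻¹ ≤ 1 := by
          have hp : (0:ℝ) < (1 - x) ^ 2 := by positivity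
          have hle : (1:ℝ) ≤ (1 - x) ^ 2 := by nlinarith [hx.2]
          nlinarith [mul_inv_cancel₀ hp.ne', mul_nonneg (sub_nonneg.mpr hle) (inv_pos.mpr hp).le]
        have h := Qf_bound u hu hbx
        rw [abs_of_nonpos (by linarith : ((1 - x) ^ 2)⁻¹ - 1 ≤ 0), neg_sub] at h
        exact h
      have h1 : (fun x => K x - H x) 0 ≤ (fun x => K x - H x) z := by
        apply anti_aux (f := fun x => K x - H x) (g := fun x => u / 4 * (((1 - x) ^ 2)⁻¹ - 1) - -Qf u (1 - x)) hzn
        · intro x hx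
          exact (hKd x (hmem x hx)).sub (hHd x (hmem x hx))
        · intro x hx
          have := hbound x hx
          have h2 := abs_le.mp this
          simp only [sub_neg_eq_add]
          linarith [h2.2]
      have h2 : (fun x => K x + H x) 0 ≤ (fun x => K x + H x) z := by
        apply anti_aux (f := fun x => K x + H x) (g := fun x => u / 4 * (((1 - x) ^ 2)⁻¹ - 1) + -Qf u (1 - x)) hzn
        · intro x hx
          exact (hKd x (hmem x hx)).add (hHd x (hmem x hx))
        · intro x hx
          have := hbound x hx
          have h2 := abs_le.mp this
          linarith [h2.1]
      simp only [hH0, hK0] at h1 h2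
      norm_num at h1 h2
      rw [abs_le]
      constructor <;> linarith
  rw [hGH, abs_of_pos hb]
  refine key.trans ?_
  have hzz : z ^ 2 ≤ 1 := by nlinarith
  rw [le_div_iff₀ (by positivity : (0:ℝ) < 4 * (1 - z))]
  have hne : (1 - z) ≠ 0 := ne_of_gt hb
  have h1 : ((1 - z)⁻¹ - 1 - z) * (1 - z) = z ^ 2 := by
    field_simp
    ring
  have expand : K z * (4 * (1 - z)) = u * z ^ 2 := by
    calc K z * (4 * (1 - z)) = u * (((1 - z)⁻¹ - 1 - z) * (1 - z)) := by
          simp only [hKdef]; ring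
    _ = u * z ^ 2 := by rw [h1]
  rw [expand]
  have := mul_le_mul_of_nonneg_left hzz hu.le
  linarith

theorem Gent_approx (ε : ℝ) (hε : 0 < ε) (z : ℝ) (hz : |z| < 1) :
    |Gent ε z - Gent0 z| ≤ Real.sqrt ε / (4 * |1 - z|) := by
  have hu : 0 < Real.sqrt ε := Real.sqrt_pos.mpr hε
  have h := main_aux (Real.sqrt ε) hu z hz
  rwa [Real.sq_sqrt hε.le] at h
end

section
/- For every ε > 0 and every z ≥ 0, |G_ε'(z)| ≤ C·z/|1 − z + ε|, where C = π/2 if z ∈ [(1+ε)/(1+√ε), (1+ε)/(1−√ε)] (assuming ε < 1 for the upper endpoint) and C = 1 otherwise; here G_ε'(z) = (1/√ε)·arctan(√ε·z/(1 − z + ε)) (plus the remaining derivative terms which cancel). -/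
open Real

lemma arctan_nonneg' {x : ℝ} (hx : 0 ≤ x) : 0 ≤ Real.arctan x := by
  simpa [Real.arctan_zero] using Real.arctan_strictMono.monotone hx

lemma abs_arctan_le_abs (x : ℝ) : |Real.arctan x| ≤ |x| := by
  have key : ∀ y : ℝ, 0 ≤ y → Real.arctan y ≤ y := by
    intro y hy
    have h1 : 0 ≤ Real.arctan y := arctan_nonneg' hy
    have h2 : Real.arctan y < Real.pi / 2 := Real.arctan_lt_pi_div_two y
    calc Real.arctan y ≤ Real.tan (Real.arctan y) := Real.le_tan h1 h2
      _ = y := Real.tan_arctan y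
  rcases le_or_gt 0 x with hx | hx
  · rw [abs_of_nonneg (arctan_nonneg' hx), abs_of_nonneg hx]
    exact key x hx
  · have hneg : Real.arctan x < 0 := by
      have := Real.arctan_strictMono hx
      simpa [Real.arctan_zero] using this
    rw [abs_of_neg hneg, abs_of_neg hx, ← Real.arctan_neg]
    exact key (-x) (by linarith)

lemma Gent_hasDerivAt (ε z : ℝ) (hε : 0 < ε) (hd : 1 - z + ε ≠ 0) :
    HasDerivAt (Gent ε)
      ((1 / Real.sqrt ε) * Real.arctan (Real.sqrt ε * z / (1 - z + ε))) z := by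
  set s := Real.sqrt ε with hs_def
  have hs : 0 < s := Real.sqrt_pos.2 hε
  have hs2 : s ^ 2 = ε := Real.sq_sqrt hε.le
  have hpos : 0 < ε + (z - 1) ^ 2 := by positivity
  have h1ε : (0:ℝ) < 1 + ε := by linarith
  -- derivative of inner quotient
  have hnum : HasDerivAt (fun z : ℝ => s * z) s z := by
    simpa using (hasDerivAt_id z).const_mul s
  have hden : HasDerivAt (fun z : ℝ => 1 - z + ε) (-1) z := by
    have : HasDerivAt (fun z : ℝ => 1 - z + ε) (0 - 1 + 0) z :=
      (((hasDerivAt_const z (1:ℝ)).sub (hasDerivAt_id z)).add (hasDerivAt_const z ε))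
    simpa using this
  have hu : HasDerivAt (fun z : ℝ => s * z / (1 - z + ε))
      ((s * (1 - z + ε) - s * z * (-1)) / (1 - z + ε) ^ 2) z := hnum.div hden hd
  have harc : HasDerivAt (fun z : ℝ => Real.arctan (s * z / (1 - z + ε)))
      ((1 / (1 + (s * z / (1 - z + ε)) ^ 2)) *
        ((s * (1 - z + ε) - s * z * (-1)) / (1 - z + ε) ^ 2)) z :=
    by have := (Real.hasDerivAt_arctan (s * z / (1 - z + ε))).comp z hu; exact this
  have hlin : HasDerivAt (fun z : ℝ => (z - 1) / s) (1 / s) z := by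
    have : HasDerivAt (fun z : ℝ => (z - 1) / s) ((1 - 0) / s) z :=
      ((hasDerivAt_id z).sub (hasDerivAt_const z 1)).div_const s
    simpa using this
  have hprod := hlin.mul harc
  have hlogin : HasDerivAt (fun z : ℝ => (ε + (z - 1) ^ 2) / (1 + ε))
      ((2 * (z - 1)) / (1 + ε)) z := by
    have h2 : HasDerivAt (fun z : ℝ => (z - 1) ^ 2) (2 * (z - 1)) z := by
      have := ((hasDerivAt_id z).sub (hasDerivAt_const z 1)).pow 2
      simpa [mul_comm, Pi.pow_def] using this
    have := ((hasDerivAt_const z ε).add h2).div_const (1 + ε)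
    simpa using this
  have hlogne : (ε + (z - 1) ^ 2) / (1 + ε) ≠ 0 := by positivity
  have hlog : HasDerivAt (fun z : ℝ => Real.log ((ε + (z - 1) ^ 2) / (1 + ε)))
      (((2 * (z - 1)) / (1 + ε)) / ((ε + (z - 1) ^ 2) / (1 + ε))) z :=
    hlogin.log hlogne
  have htot := hprod.sub (hlog.const_mul (1/2 : ℝ))
  have heq : (1 / s) * Real.arctan (s * z / (1 - z + ε)) +
      (z - 1) / s * ((1 / (1 + (s * z / (1 - z + ε)) ^ 2)) *
        ((s * (1 - z + ε) - s * z * (-1)) / (1 - z + ε) ^ 2)) -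
      (1/2 : ℝ) * (((2 * (z - 1)) / (1 + ε)) / ((ε + (z - 1) ^ 2) / (1 + ε))) =
      (1 / s) * Real.arctan (s * z / (1 - z + ε)) := by
    rw [← hs2]
    have hBC : (z - 1) / s * ((1 / (1 + (s * z / (1 - z + s^2)) ^ 2)) *
          ((s * (1 - z + s^2) - s * z * (-1)) / (1 - z + s^2) ^ 2)) =
        (1/2 : ℝ) * (((2 * (z - 1)) / (1 + s^2)) / ((s^2 + (z - 1) ^ 2) / (1 + s^2))) := by
      have hd' : 1 - z + s^2 ≠ 0 := by rwa [hs2]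
      have hq : (1 : ℝ) + (s * z / (1 - z + s^2)) ^ 2 =
          ((1+s^2)*(s^2+(z-1)^2)) / (1 - z + s^2)^2 := by
        field_simp
        ring
      rw [hq]
      field_simp
      ring
    rw [hBC]
    ring
  rw [← heq]
  convert htot using 1
  all_goals exact rfl

lemma Gent_not_continuousAt (ε : ℝ) (hε : 0 < ε) : ¬ ContinuousAt (Gent ε) (1 + ε) := by
  intro hc
  set s := Real.sqrt ε with hs_def
  have hs : 0 < s := Real.sqrt_pos.2 hε
  have hT1 : Filter.Tendsto (fun z : ℝ => s * z / (1 - z + ε)) (nhdsWithin (1+ε) (Set.Iio (1+ε)))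
      Filter.atTop := by
    have hnum : Filter.Tendsto (fun z : ℝ => s * z) (nhdsWithin (1+ε) (Set.Iio (1+ε)))
        (nhds (s * (1+ε))) :=
      ((continuous_const.mul continuous_id).tendsto _).mono_left nhdsWithin_le_nhds
    have hinv : Filter.Tendsto (fun z : ℝ => (1 - z + ε)⁻¹) (nhdsWithin (1+ε) (Set.Iio (1+ε)))
        Filter.atTop := by
      apply tendsto_inv_nhdsGT_zero.comp
      rw [tendsto_nhdsWithin_iff]
      constructor
      · have : Filter.Tendsto (fun z : ℝ => 1 - z + ε) (nhds (1+ε)) (nhds (1 - (1+ε) + ε)) :=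
          Continuous.tendsto (by continuity) _
        have h0 : 1 - (1+ε) + ε = 0 := by ring
        rw [h0] at this
        exact this.mono_left nhdsWithin_le_nhds
      · filter_upwards [self_mem_nhdsWithin] with x hx
        simp only [Set.mem_Iio] at hx
        simp only [Set.mem_Ioi]
        linarith
    have := Filter.Tendsto.pos_mul_atTop (by positivity : (0:ℝ) < s * (1+ε)) hnum hinv
    simpa [div_eq_mul_inv] using this
  have hT2 : Filter.Tendsto (fun z : ℝ => Real.arctan (s * z / (1 - z + ε)))
      (nhdsWithin (1+ε) (Set.Iio (1+ε))) (nhds (Real.pi/2)) :=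
    (Real.tendsto_arctan_atTop.mono_right nhdsWithin_le_nhds).comp hT1
  have hlin : Filter.Tendsto (fun z : ℝ => (z - 1) / s) (nhdsWithin (1+ε) (Set.Iio (1+ε)))
      (nhds ((1 + ε - 1) / s)) :=
    (((continuous_id.sub continuous_const).div_const s).tendsto _).mono_left nhdsWithin_le_nhds
  have hlogne : (ε + (1 + ε - 1) ^ 2) / (1 + ε) ≠ 0 := by positivity
  have hlog : Filter.Tendsto (fun z : ℝ => Real.log ((ε + (z - 1) ^ 2) / (1 + ε)))
      (nhdsWithin (1+ε) (Set.Iio (1+ε))) (nhds (Real.log ((ε + (1 + ε - 1) ^ 2) / (1 + ε)))) := by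
    have hcont : ContinuousAt (fun z : ℝ => Real.log ((ε + (z - 1) ^ 2) / (1 + ε))) (1+ε) := by
      exact ContinuousAt.log (by fun_prop) hlogne
    exact hcont.tendsto.mono_left nhdsWithin_le_nhds
  have hG : Filter.Tendsto (Gent ε) (nhdsWithin (1+ε) (Set.Iio (1+ε)))
      (nhds ((1 + ε - 1) / s * (Real.pi/2) - (1/2) * Real.log ((ε + (1 + ε - 1) ^ 2) / (1 + ε)))) := by
    exact (hlin.mul hT2).sub (hlog.const_mul (1/2 : ℝ))
  have hG' : Filter.Tendsto (Gent ε) (nhdsWithin (1+ε) (Set.Iio (1+ε))) (nhds (Gent ε (1+ε))) :=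
    hc.continuousWithinAt
  have huniq := tendsto_nhds_unique hG hG'
  have hval : Gent ε (1+ε) = -(1/2) * Real.log ((ε + (1 + ε - 1) ^ 2) / (1 + ε)) := by
    unfold Gent
    rw [← hs_def]
    have h0 : 1 - (1+ε) + ε = 0 := by ring
    rw [h0, div_zero, Real.arctan_zero, mul_zero]
    ring
  rw [hval] at huniq
  have hpi : 0 < (1 + ε - 1) / s * (Real.pi/2) := by
    have : (0:ℝ) < ε / s := by positivity
    have hps : 0 < Real.pi / 2 := by positivity
    calc (0:ℝ) < ε / s * (Real.pi/2) := by positivity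
      _ = (1 + ε - 1) / s * (Real.pi/2) := by ring_nf
  linarith [huniq]

lemma Gent_deriv_zero (ε : ℝ) (hε : 0 < ε) : deriv (Gent ε) (1 + ε) = 0 :=
  deriv_zero_of_not_differentiableAt
    (fun h => Gent_not_continuousAt ε hε h.continuousAt)

theorem Gent_deriv_bound (ε : ℝ) (hε : 0 < ε) (hε1 : ε < 1) (z : ℝ) (hz : 0 ≤ z) :
    (z ∈ Set.Icc ((1 + ε) / (1 + Real.sqrt ε)) ((1 + ε) / (1 - Real.sqrt ε)) →
      |deriv (Gent ε) z| ≤ (Real.pi / 2) * z / |1 - z + ε|) ∧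
    (z ∉ Set.Icc ((1 + ε) / (1 + Real.sqrt ε)) ((1 + ε) / (1 - Real.sqrt ε)) →
      |deriv (Gent ε) z| ≤ 1 * z / |1 - z + ε|) := by
  set s := Real.sqrt ε with hs_def
  have hs : 0 < s := Real.sqrt_pos.2 hε
  have hs1 : s < 1 := by
    nlinarith [Real.sq_sqrt hε.le, Real.sqrt_nonneg ε]
  have h1ps : (0:ℝ) < 1 + s := by linarith
  have h1ms : (0:ℝ) < 1 - s := by linarith
  have h1e : (0:ℝ) < 1 + ε := by linarith
  constructor
  · intro hmem
    by_cases hd : 1 - z + ε = 0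
    · have hz' : z = 1 + ε := by linarith
      rw [hz', Gent_deriv_zero ε hε]
      have h0 : 1 - (1 + ε) + ε = 0 := by ring
      rw [h0]
      simp
    · rw [(Gent_hasDerivAt ε z hε hd).deriv]
      have habs : |1 - z + ε| ≤ s * z := by
        rw [abs_le]
        constructor
        · have h2 : z * (1 - s) ≤ 1 + ε := by
            have := hmem.2
            rwa [le_div_iff₀ h1ms] at this
          nlinarith
        · have h1 : 1 + ε ≤ z * (1 + s) := by
            have := hmem.1
            rwa [div_le_iff₀ h1ps] at this
          nlinarith
      have hdpos : 0 < |1 - z + ε| := abs_pos.2 hd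
      have harc : |Real.arctan (s * z / (1 - z + ε))| ≤ Real.pi / 2 :=
        abs_le.2 ⟨by linarith [Real.neg_pi_div_two_lt_arctan (s * z / (1 - z + ε))],
          (Real.arctan_lt_pi_div_two _).le⟩
      rw [abs_mul, abs_of_nonneg (by positivity : (0:ℝ) ≤ 1 / s)]
      calc 1 / s * |Real.arctan (s * z / (1 - z + ε))| ≤ 1 / s * (Real.pi / 2) := by
            apply mul_le_mul_of_nonneg_left harc (by positivity)
        _ ≤ Real.pi / 2 * z / |1 - z + ε| := by
            have he : 1 / s * (Real.pi / 2) = (Real.pi / 2) / s := by ring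
            rw [he, div_le_div_iff₀ hs hdpos]
            nlinarith [Real.pi_pos]
  · intro hnot
    have hd : 1 - z + ε ≠ 0 := by
      intro h
      apply hnot
      have hz' : z = 1 + ε := by linarith
      constructor
      · rw [div_le_iff₀ h1ps, hz']
        nlinarith
      · rw [le_div_iff₀ h1ms, hz']
        nlinarith
    rw [(Gent_hasDerivAt ε z hε hd).deriv]
    have hdpos : 0 < |1 - z + ε| := abs_pos.2 hd
    rw [abs_mul, abs_of_nonneg (by positivity : (0:ℝ) ≤ 1 / s)]
    calc 1 / s * |Real.arctan (s * z / (1 - z + ε))| ≤ 1 / s * |s * z / (1 - z + ε)| :=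
          mul_le_mul_of_nonneg_left (abs_arctan_le_abs _) (by positivity)
      _ = 1 * z / |1 - z + ε| := by
          rw [abs_div, abs_mul, abs_of_nonneg hs.le, abs_of_nonneg hz]
          field_simp
end
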